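/- (Bregman-distance boundedness of the iterates.) Under the same hypotheses as the abstract ergodic convergence theorem — X ⊆ ℝ^n, Y ⊆ ℝ^m nonempty compact convex; φ differentiable and c_φ-strongly convex w.r.t. ‖·‖_X, ψ differentiable and c_ψ-strongly convex w.r.t. ‖·‖_Y, c_φ, c_ψ > 0; M = M_x + M_y with |⟨M_x a, b⟩| ≤ L_x‖a‖_X‖b‖_Y, |⟨M_y a, b⟩| ≤ L_y‖a‖_X‖b‖_Y, μ := L_x + L_y > 0; η_0 = 0, x_{−1} = x_0 ∈ X, y_{−1} = y_0 ∈ Y, 0 < η_k ≤ √(c_φ c_ψ)/(2μ) for k = 1, …, K; and for each k ≥ 1: x_k minimizes x ↦ η_k⟨x, h_k⟩ + D_φ(x, x_{k−1}) over X, y_k maximizes v ↦ η_k⟨g_k, v⟩ − D_ψ(v, y_{k−1}) over Y, the extrapolation identities M x_k − g_k = M_y((x_k − x̂_k) − (η_{k−1}/η_k)(x_{k−1} − x̂_{k−1})) + M_x((x_k − x_{k−1}) − (η_{k−1}/η_k)(x_{k−1} − x_{k−2})) and Mᵀ y_k − h_k = M_xᵀ((y_k − ŷ_k) − (η_{k−1}/η_k)(y_{k−1}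 − ŷ_{k−1})) + M_yᵀ((y_k − y_{k−1}) − (η_{k−1}/η_k)(y_{k−1} − y_{k−2})) hold, and ‖x_k − x̂_k‖_X ≤ ‖x_k − x_{k−1}‖_X, ‖y_k − ŷ_k‖_Y ≤ ‖y_k − y_{k−1}‖_Y — suppose additionally that (x*, y*) ∈ X × Y is a saddle point of ⟨Mx, y⟩ on X × Y, i.e. ⟨M x*, y⟩ ≤ ⟨M x*, y*⟩ ≤ ⟨M x, y*⟩ for all x ∈ X, y ∈ Y. Then (1/2)·D_φ(x*, x_K) + (1/2)·D_ψ(y*, y_K) ≤ D_φ(x*, x_0) + D_ψ(y*, y_0). -/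
import Mathlib


/-- The standard inner product on `ℝ^d`. -/
def dotp {d : ℕ} (a b : Fin d → ℝ) : ℝ := ∑ i, a i * b i

/-- The Bregman divergence `D_f(a, b) = f a - f b - ⟨∇f(b), a - b⟩`. -/
noncomputable def breg {d : ℕ} (f : (Fin d → ℝ) → ℝ) (a b : Fin d → ℝ) : ℝ :=
  f a - f b - fderiv ℝ f b (a - b)

lemma dotp_comm {d : ℕ} (a b : Fin d → ℝ) : dotp a b = dotp b a := by
  simp [dotp, mul_comm]

lemma dotp_add_left {d : ℕ} (a b c : Fin d → ℝ) : dotp (a + b) c = dotp a c + dotp b c := by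
  simp [dotp, add_mul, Finset.sum_add_distrib]

lemma dotp_sub_left {d : ℕ} (a b c : Fin d → ℝ) : dotp (a - b) c = dotp a c - dotp b c := by
  simp [dotp, sub_mul, Finset.sum_sub_distrib]

lemma dotp_sub_right {d : ℕ} (a b c : Fin d → ℝ) : dotp a (b - c) = dotp a b - dotp a c := by
  simp [dotp, mul_sub, Finset.sum_sub_distrib]

lemma dotp_smul_left {d : ℕ} (r : ℝ) (a b : Fin d → ℝ) : dotp (r • a) b = r * dotp a b := by
  simp [dotp, Finset.mul_sum, mul_assoc]

lemma dotp_transpose {m n : ℕ} (M : Matrix (Fin m) (Fin n) ℝ) (a : Fin n → ℝ) (b : Fin m → ℝ) :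
    dotp (M.transpose.mulVec b) a = dotp (M.mulVec a) b := by
  simp only [dotp, Matrix.mulVec, dotProduct, Matrix.transpose_apply, Finset.sum_mul]
  rw [Finset.sum_comm]
  exact Finset.sum_congr rfl fun i _ => Finset.sum_congr rfl fun j _ => by ring

noncomputable def dotpCLM {d : ℕ} (h : Fin d → ℝ) : (Fin d → ℝ) →L[ℝ] ℝ :=
  LinearMap.toContinuousLinearMap
    { toFun := fun z => dotp z h
      map_add' := fun a b => dotp_add_left a b h
      map_smul' := fun r a => by simpa using dotp_smul_left r a h }

lemma dotpCLM_apply {d : ℕ} (h z : Fin d → ℝ) : dotpCLM h z = dotp z h := rfl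

lemma three_point {d : ℕ} (φ : (Fin d → ℝ) → ℝ) (z a b : Fin d → ℝ) :
    breg φ z b - breg φ z a - breg φ a b
      = (fderiv ℝ φ a) (z - a) - (fderiv ℝ φ b) (z - a) := by
  simp only [breg, map_sub]; ring

lemma vi_min {d : ℕ} {s : Set (Fin d → ℝ)} (hs : Convex ℝ s) (η' : ℝ) (hv b : Fin d → ℝ)
    {φ : (Fin d → ℝ) → ℝ} (hφ : Differentiable ℝ φ) {a z : Fin d → ℝ}
    (ha : a ∈ s) (hz : z ∈ s)
    (hmin : IsMinOn (fun w => η' * dotp w hv + breg φ w b) s a) :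
    0 ≤ η' * dotp (z - a) hv + (fderiv ℝ φ a) (z - a) - (fderiv ℝ φ b) (z - a) := by
  have h2 : HasFDerivAt (fun w => breg φ w b) (fderiv ℝ φ a - fderiv ℝ φ b) a := by
    have hfe : (fun w => breg φ w b)
        = fun w => (φ w - φ b) - ((fderiv ℝ φ b) w - (fderiv ℝ φ b) b) := by
      funext w; simp [breg, map_sub]
    rw [hfe]
    exact ((hφ a).hasFDerivAt.sub_const (φ b)).sub
      (((fderiv ℝ φ b).hasFDerivAt).sub_const _)
  have hd : HasFDerivAt (fun w => η' * dotp w hv + breg φ w b)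
      (η' • dotpCLM hv + (fderiv ℝ φ a - fderiv ℝ φ b)) a :=
    (((dotpCLM hv).hasFDerivAt).const_mul η').add h2
  have hvi := (hmin.localize).hasFDerivWithinAt_nonneg hd.hasFDerivWithinAt
    (sub_mem_posTangentConeAt_of_segment_subset (hs.segment_subset ha hz))
  simp only [ContinuousLinearMap.add_apply, ContinuousLinearMap.coe_smul', Pi.smul_apply,
    ContinuousLinearMap.coe_sub', Pi.sub_apply, dotpCLM_apply, smul_eq_mul, map_sub, dotp_sub_left] at hvi ⊢
  linarith

lemma amgm_sqrt {cφ cψ p q : ℝ} (hcφ : 0 < cφ) (hcψ : 0 < cψ) :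
    Real.sqrt (cφ * cψ) * (p * q) ≤ cφ / 2 * p ^ 2 + cψ / 2 * q ^ 2 := by
  have h1 : Real.sqrt (cφ * cψ) = Real.sqrt cφ * Real.sqrt cψ := Real.sqrt_mul hcφ.le _
  rw [h1]
  nlinarith [sq_nonneg (Real.sqrt cφ * p - Real.sqrt cψ * q), Real.sq_sqrt hcφ.le,
    Real.sq_sqrt hcψ.le, Real.sqrt_nonneg cφ, Real.sqrt_nonneg cψ]

lemma key_bound {cφ cψ μ' η' p q D : ℝ} (hμ : 0 < μ') (hcφ : 0 < cφ) (hcψ : 0 < cψ)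
    (hp : 0 ≤ p) (hq : 0 ≤ q) (hη : 0 ≤ η')
    (hle : η' ≤ Real.sqrt (cφ * cψ) / (2 * μ')) (hD : D ≤ μ' * p * q) :
    η' * D ≤ cφ / 4 * p ^ 2 + cψ / 4 * q ^ 2 := by
  have h2 : η' * D ≤ η' * (μ' * p * q) := by nlinarith
  have h3 : η' * (μ' * p * q) ≤ Real.sqrt (cφ * cψ) / (2 * μ') * (μ' * p * q) := by
    apply mul_le_mul_of_nonneg_right hle; positivity
  have h4 : Real.sqrt (cφ * cψ) / (2 * μ') * (μ' * p * q)
      = Real.sqrt (cφ * cψ) * (p * q) / 2 := by field_simp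
  have h5 := amgm_sqrt (p := p) (q := q) hcφ hcψ
  linarith

lemma tele (f : ℕ → ℝ) (K : ℕ) : ∑ k ∈ Finset.Icc 1 K, (f k - f (k - 1)) = f K - f 0 := by
  induction K with
  | zero => simp
  | succ K ih =>
    rw [Finset.sum_Icc_succ_top (Nat.succ_le_succ (Nat.zero_le K)), ih]
    simp

lemma shift (g : ℕ → ℝ) (h0 : g 0 = 0) (K : ℕ) (hK : 1 ≤ K) :
    ∑ k ∈ Finset.Icc 1 K, g (k - 1) = (∑ k ∈ Finset.Icc 1 K, g k) - g K := by
  induction K, hK using Nat.le_induction with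
  | base => simp [h0]
  | succ K hK ih =>
    rw [Finset.sum_Icc_succ_top (by omega), Finset.sum_Icc_succ_top (by omega), ih]
    simp

lemma decomp {m n : ℕ} (M : Matrix (Fin m) (Fin n) ℝ) (xk xs h' : Fin n → ℝ)
    (yk ys g' : Fin m → ℝ) :
    dotp (M.mulVec xk) ys - dotp (M.mulVec xs) yk =
      dotp (ys - yk) g' + dotp (M.mulVec xk - g') (ys - yk)
      - dotp (xs - xk) h' + dotp (M.transpose.mulVec yk - h') (xk - xs) := by
  simp only [dotp_sub_left, dotp_sub_right, dotp_transpose]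
  linear_combination -(dotp_comm ys g') + (dotp_comm yk g') - (dotp_comm xk h') + (dotp_comm xs h')


set_option maxHeartbeats 2000000 in
/-- Bregman-distance boundedness of the iterates: under the hypotheses of the abstract
ergodic convergence theorem, if `(x*, y*)` is a saddle point of `⟨Mx, y⟩` on `X × Y`, then
`(1/2) D_φ(x*, x_K) + (1/2) D_ψ(y*, y_K) ≤ D_φ(x*, x_0) + D_ψ(y*, y_0)`.
Indices are natural numbers with truncated subtraction, so that `x (k - 2)` for `k = 1`
equals `x 0`, encoding the convention `x_{-1} = x_0` (similarly for `y` and `η 0 = 0`). -/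
theorem stmt_12 {m n : ℕ}
    (X : Set (Fin n → ℝ)) (hXne : X.Nonempty) (hXcpt : IsCompact X) (hXcvx : Convex ℝ X)
    (Y : Set (Fin m → ℝ)) (hYne : Y.Nonempty) (hYcpt : IsCompact Y) (hYcvx : Convex ℝ Y)
    (NX : (Fin n → ℝ) → ℝ) (NY : (Fin m → ℝ) → ℝ)
    (hNX_def : ∀ x, NX x = 0 ↔ x = 0)
    (hNX_smul : ∀ (c : ℝ) (x : Fin n → ℝ), NX (c • x) = |c| * NX x)
    (hNX_add : ∀ x y : Fin n → ℝ, NX (x + y) ≤ NX x + NX y)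
    (hNY_def : ∀ y, NY y = 0 ↔ y = 0)
    (hNY_smul : ∀ (c : ℝ) (y : Fin m → ℝ), NY (c • y) = |c| * NY y)
    (hNY_add : ∀ y z : Fin m → ℝ, NY (y + z) ≤ NY y + NY z)
    (cφ cψ : ℝ) (hcφ : 0 < cφ) (hcψ : 0 < cψ)
    (φ : (Fin n → ℝ) → ℝ) (hφ : Differentiable ℝ φ)
    (hφsc : ∀ a b : Fin n → ℝ,
      φ b ≥ φ a + fderiv ℝ φ a (b - a) + cφ / 2 * (NX (b - a)) ^ 2)
    (ψ : (Fin m → ℝ) → ℝ) (hψ : Differentiable ℝ ψ)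
    (hψsc : ∀ a b : Fin m → ℝ,
      ψ b ≥ ψ a + fderiv ℝ ψ a (b - a) + cψ / 2 * (NY (b - a)) ^ 2)
    (M Mx My : Matrix (Fin m) (Fin n) ℝ) (hM : M = Mx + My)
    (Lx Ly : ℝ) (hLx : 0 ≤ Lx) (hLy : 0 ≤ Ly) (hμ : 0 < Lx + Ly)
    (hbx : ∀ (a : Fin n → ℝ) (b : Fin m → ℝ), |dotp (Mx.mulVec a) b| ≤ Lx * NX a * NY b)
    (hby : ∀ (a : Fin n → ℝ) (b : Fin m → ℝ), |dotp (My.mulVec a) b| ≤ Ly * NX a * NY b)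
    (K : ℕ) (hK : 1 ≤ K)
    (η : ℕ → ℝ) (hη0 : η 0 = 0)
    (hη : ∀ k ∈ Finset.Icc 1 K,
      0 < η k ∧ η k ≤ Real.sqrt (cφ * cψ) / (2 * (Lx + Ly)))
    (x : ℕ → Fin n → ℝ) (y : ℕ → Fin m → ℝ)
    (hx0 : x 0 ∈ X) (hy0 : y 0 ∈ Y)
    (g : ℕ → Fin m → ℝ) (h : ℕ → Fin n → ℝ)
    (xhat : ℕ → Fin n → ℝ) (yhat : ℕ → Fin m → ℝ)
    (hxmin : ∀ k ∈ Finset.Icc 1 K, x k ∈ X ∧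
      IsMinOn (fun z => η k * dotp z (h k) + breg φ z (x (k - 1))) X (x k))
    (hymax : ∀ k ∈ Finset.Icc 1 K, y k ∈ Y ∧
      IsMaxOn (fun v => η k * dotp (g k) v - breg ψ v (y (k - 1))) Y (y k))
    (hidx : ∀ k ∈ Finset.Icc 1 K,
      M.mulVec (x k) - g k =
        My.mulVec ((x k - xhat k) - (η (k - 1) / η k) • (x (k - 1) - xhat (k - 1))) +
        Mx.mulVec ((x k - x (k - 1)) - (η (k - 1) / η k) • (x (k - 1) - x (k - 2))))
    (hidy : ∀ k ∈ Finset.Icc 1 K,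
      M.transpose.mulVec (y k) - h k =
        Mx.transpose.mulVec ((y k - yhat k) - (η (k - 1) / η k) • (y (k - 1) - yhat (k - 1))) +
        My.transpose.mulVec ((y k - y (k - 1)) - (η (k - 1) / η k) • (y (k - 1) - y (k - 2))))
    (hcx : ∀ k ∈ Finset.Icc 1 K, NX (x k - xhat k) ≤ NX (x k - x (k - 1)))
    (hcy : ∀ k ∈ Finset.Icc 1 K, NY (y k - yhat k) ≤ NY (y k - y (k - 1)))
    (xstar : Fin n → ℝ) (ystar : Fin m → ℝ)
    (hxstar : xstar ∈ X) (hystar : ystar ∈ Y)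
    (hsaddle : ∀ x' ∈ X, ∀ y' ∈ Y,
      dotp (M.mulVec xstar) y' ≤ dotp (M.mulVec xstar) ystar ∧
      dotp (M.mulVec xstar) ystar ≤ dotp (M.mulVec x') ystar) :
    1 / 2 * breg φ xstar (x K) + 1 / 2 * breg ψ ystar (y K) ≤
      breg φ xstar (x 0) + breg ψ ystar (y 0) := by
  classical
  -- basic norm facts
  have hNX0 : NX 0 = 0 := (hNX_def 0).mpr rfl
  have hNY0 : NY 0 = 0 := (hNY_def 0).mpr rfl
  have hNXneg : ∀ v, NX (-v) = NX v := fun v => by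
    have h1 := hNX_smul (-1) v
    rwa [neg_one_smul, abs_neg, abs_one, one_mul] at h1
  have hNYneg : ∀ v, NY (-v) = NY v := fun v => by
    have h1 := hNY_smul (-1) v
    rwa [neg_one_smul, abs_neg, abs_one, one_mul] at h1
  have hNXnn : ∀ v, 0 ≤ NX v := fun v => by
    have h1 := hNX_add v (-v)
    rw [add_neg_cancel, hNX0, hNXneg] at h1; linarith
  have hNYnn : ∀ v, 0 ≤ NY v := fun v => by
    have h1 := hNY_add v (-v)
    rw [add_neg_cancel, hNY0, hNYneg] at h1; linarith
  set Dx : ℕ → ℝ := fun j => breg φ xstar (x j) with hDx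
  set Dy : ℕ → ℝ := fun j => breg ψ ystar (y j) with hDy
  set aN : ℕ → ℝ := fun j => NX (x j - x (j - 1)) with haN
  set bN : ℕ → ℝ := fun j => NY (y j - y (j - 1)) with hbN
  set A : ℕ → ℝ := fun j =>
    η j * dotp (My.mulVec (x j - xhat j) + Mx.mulVec (x j - x (j - 1))) (ystar - y j) with hA
  set B : ℕ → ℝ := fun j =>
    η j * dotp (Mx.transpose.mulVec (y j - yhat j) + My.transpose.mulVec (y j - y (j - 1)))
      (x j - xstar) with hB
  -- the per-step inequality
  have hstep : ∀ k ∈ Finset.Icc 1 K,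
      Dx k + Dy k - (Dx (k - 1) + Dy (k - 1)) ≤
        (A k - A (k - 1)) + (B k - B (k - 1))
        + (cφ / 4 * aN (k - 1) ^ 2 + cψ / 4 * bN k ^ 2)
        + (cφ / 4 * aN k ^ 2 + cψ / 4 * bN (k - 1) ^ 2)
        - cφ / 2 * aN k ^ 2 - cψ / 2 * bN k ^ 2 := by
    intro k hk
    obtain ⟨hk1, hkK⟩ := Finset.mem_Icc.mp hk
    have hηk := hη k hk
    have hxk := hxmin k hk
    have hyk := hymax k hk
    -- x-side variational inequality and three-point identity
    have hviX := vi_min hXcvx (η k) (h k) (x (k - 1)) hφ hxk.1 hxstar hxk.2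
    have htpX := three_point φ xstar (x k) (x (k - 1))
    -- y-side
    have hminY : IsMinOn (fun v => -(η k) * dotp v (g k) + breg ψ v (y (k - 1))) Y (y k) := by
      refine isMinOn_iff.mpr fun v hv => ?_
      have hmx := isMaxOn_iff.mp hyk.2 v hv
      rw [dotp_comm (y k) (g k), dotp_comm v (g k)]
      linarith
    have hviY := vi_min hYcvx (-(η k)) (g k) (y (k - 1)) hψ hyk.1 hystar hminY
    have htpY := three_point ψ ystar (y k) (y (k - 1))
    -- strong convexity lower bounds
    have hscX : cφ / 2 * NX (x k - x (k - 1)) ^ 2 ≤ breg φ (x k) (x (k - 1)) := by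
      have h1 := hφsc (x (k - 1)) (x k)
      simp only [breg]
      linarith
    have hscY : cψ / 2 * NY (y k - y (k - 1)) ^ 2 ≤ breg ψ (y k) (y (k - 1)) := by
      have h1 := hψsc (y (k - 1)) (y k)
      simp only [breg]
      linarith
    -- saddle point inequality (times η k)
    have hsd := hsaddle (x k) hxk.1 (y k) hyk.1
    have hsadd : 0 ≤ η k * dotp (M.mulVec (x k)) ystar - η k * dotp (M.mulVec xstar) (y k) := by
      have h1 : dotp (M.mulVec xstar) (y k) ≤ dotp (M.mulVec (x k)) ystar := hsd.1.trans hsd.2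
      nlinarith [hηk.1.le]
    -- decomposition identity times η k
    have hdec : η k * dotp (M.mulVec (x k)) ystar - η k * dotp (M.mulVec xstar) (y k)
        = η k * dotp (ystar - y k) (g k) + η k * dotp (M.mulVec (x k) - g k) (ystar - y k)
          - η k * dotp (xstar - x k) (h k)
          + η k * dotp (M.transpose.mulVec (y k) - h k) (x k - xstar) := by
      linear_combination (η k) * decomp M (x k) xstar (h k) (y k) ystar (g k)
    have hk21 : k - 2 = k - 1 - 1 := by omega
    have hne : η k ≠ 0 := hηk.1.ne'
    -- extrapolation error identities
    have herrX : η k * dotp (M.mulVec (x k) - g k) (ystar - y k)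
        = η k * dotp (My.mulVec (x k - xhat k) + Mx.mulVec (x k - x (k - 1))) (ystar - y k)
          - η (k - 1) * dotp (My.mulVec (x (k - 1) - xhat (k - 1))
              + Mx.mulVec (x (k - 1) - x (k - 1 - 1))) (ystar - y (k - 1))
          + η (k - 1) * dotp (My.mulVec (x (k - 1) - xhat (k - 1))
              + Mx.mulVec (x (k - 1) - x (k - 1 - 1))) (y k - y (k - 1)) := by
      rw [hidx k hk, hk21]
      simp only [Matrix.mulVec_sub, Matrix.mulVec_smul, dotp_add_left, dotp_sub_left,
        dotp_smul_left, dotp_sub_right, smul_eq_mul]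
      field_simp
      ring
    have herrY : η k * dotp (M.transpose.mulVec (y k) - h k) (x k - xstar)
        = η k * dotp (Mx.transpose.mulVec (y k - yhat k)
              + My.transpose.mulVec (y k - y (k - 1))) (x k - xstar)
          - η (k - 1) * dotp (Mx.transpose.mulVec (y (k - 1) - yhat (k - 1))
              + My.transpose.mulVec (y (k - 1) - y (k - 1 - 1))) (x (k - 1) - xstar)
          - η (k - 1) * dotp (Mx.transpose.mulVec (y (k - 1) - yhat (k - 1))
              + My.transpose.mulVec (y (k - 1) - y (k - 1 - 1))) (x k - x (k - 1)) := by
      rw [hidy k hk, hk21]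
      simp only [Matrix.mulVec_sub, Matrix.mulVec_smul, dotp_add_left, dotp_sub_left,
        dotp_smul_left, dotp_sub_right, smul_eq_mul]
      field_simp
      ring
    -- bounds on the cross terms
    have hcr1 : η (k - 1) * dotp (My.mulVec (x (k - 1) - xhat (k - 1))
          + Mx.mulVec (x (k - 1) - x (k - 1 - 1))) (y k - y (k - 1))
        ≤ cφ / 4 * NX (x (k - 1) - x (k - 1 - 1)) ^ 2 + cψ / 4 * NY (y k - y (k - 1)) ^ 2 := by
      rcases eq_or_lt_of_le hk1 with h1 | h1
      · rw [show k - 1 = 0 from by omega, hη0, zero_mul]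
        positivity
      · have hkm : k - 1 ∈ Finset.Icc 1 K := Finset.mem_Icc.mpr ⟨by omega, by omega⟩
        apply key_bound hμ hcφ hcψ (hNXnn _) (hNYnn _) (hη _ hkm).1.le (hη _ hkm).2
        rw [dotp_add_left]
        have hb1 := (le_abs_self _).trans (hby (x (k - 1) - xhat (k - 1)) (y k - y (k - 1)))
        have hb2 := (le_abs_self _).trans (hbx (x (k - 1) - x (k - 1 - 1)) (y k - y (k - 1)))
        have hb3 := hcx (k - 1) hkm
        have hb4 := mul_le_mul_of_nonneg_right (mul_le_mul_of_nonneg_left hb3 hLy)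
          (hNYnn (y k - y (k - 1)))
        linarith
    have hcr2 : η (k - 1) * -(dotp (Mx.transpose.mulVec (y (k - 1) - yhat (k - 1))
          + My.transpose.mulVec (y (k - 1) - y (k - 1 - 1))) (x k - x (k - 1)))
        ≤ cφ / 4 * NX (x k - x (k - 1)) ^ 2 + cψ / 4 * NY (y (k - 1) - y (k - 1 - 1)) ^ 2 := by
      rcases eq_or_lt_of_le hk1 with h1 | h1
      · rw [show k - 1 = 0 from by omega, hη0, zero_mul]
        positivity
      · have hkm : k - 1 ∈ Finset.Icc 1 K := Finset.mem_Icc.mpr ⟨by omega, by omega⟩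
        apply key_bound hμ hcφ hcψ (hNXnn _) (hNYnn _) (hη _ hkm).1.le (hη _ hkm).2
        rw [dotp_add_left, dotp_transpose, dotp_transpose]
        have hb1 := neg_le_abs (dotp (Mx.mulVec (x k - x (k - 1))) (y (k - 1) - yhat (k - 1)))
        have hb1' := hbx (x k - x (k - 1)) (y (k - 1) - yhat (k - 1))
        have hb2 := neg_le_abs (dotp (My.mulVec (x k - x (k - 1))) (y (k - 1) - y (k - 1 - 1)))
        have hb2' := hby (x k - x (k - 1)) (y (k - 1) - y (k - 1 - 1))
        have hb3 := hcy (k - 1) hkm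
        have hb4 := mul_le_mul_of_nonneg_left hb3 (mul_nonneg hLx (hNXnn (x k - x (k - 1))))
        linarith
    -- assemble
    simp only [hDx, hDy, haN, hbN, hA, hB]
    linarith [hviX, htpX, hviY, htpY, hscX, hscY, hsadd, hdec, herrX, herrY, hcr1, hcr2]
  -- summation
  have hsum := Finset.sum_le_sum hstep
  have hTD : ∑ k ∈ Finset.Icc 1 K, (Dx k + Dy k - (Dx (k - 1) + Dy (k - 1)))
      = (Dx K + Dy K) - (Dx 0 + Dy 0) := by
    simpa using tele (fun j => Dx j + Dy j) K
  have hTA : ∑ k ∈ Finset.Icc 1 K, (A k - A (k - 1)) = A K - A 0 := tele A K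
  have hTB : ∑ k ∈ Finset.Icc 1 K, (B k - B (k - 1)) = B K - B 0 := tele B K
  have hA0 : A 0 = 0 := by simp [hA, hη0]
  have hB0 : B 0 = 0 := by simp [hB, hη0]
  have haN0 : aN 0 = 0 := by simp [haN, hNX0]
  have hbN0 : bN 0 = 0 := by simp [hbN, hNY0]
  have hSa : ∑ k ∈ Finset.Icc 1 K, aN (k - 1) ^ 2
      = (∑ k ∈ Finset.Icc 1 K, aN k ^ 2) - aN K ^ 2 :=
    shift (fun j => aN j ^ 2) (by simp [haN0]) K hK
  have hSb : ∑ k ∈ Finset.Icc 1 K, bN (k - 1) ^ 2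
      = (∑ k ∈ Finset.Icc 1 K, bN k ^ 2) - bN K ^ 2 :=
    shift (fun j => bN j ^ 2) (by simp [hbN0]) K hK
  have hRHS : ∑ k ∈ Finset.Icc 1 K,
      ((A k - A (k - 1)) + (B k - B (k - 1))
        + (cφ / 4 * aN (k - 1) ^ 2 + cψ / 4 * bN k ^ 2)
        + (cφ / 4 * aN k ^ 2 + cψ / 4 * bN (k - 1) ^ 2)
        - cφ / 2 * aN k ^ 2 - cψ / 2 * bN k ^ 2)
      = (A K - A 0) + (B K - B 0)
        - cφ / 4 * aN K ^ 2 - cψ / 4 * bN K ^ 2 := by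
    simp only [Finset.sum_add_distrib, Finset.sum_sub_distrib, ← Finset.mul_sum,
      hTA, hTB, hSa, hSb]
    ring
  -- final bounds at K
  have hKK : K ∈ Finset.Icc 1 K := Finset.mem_Icc.mpr ⟨hK, le_refl K⟩
  have hAK : A K ≤ cφ / 4 * aN K ^ 2 + cψ / 4 * NY (ystar - y K) ^ 2 := by
    have hDb : dotp (My.mulVec (x K - xhat K) + Mx.mulVec (x K - x (K - 1))) (ystar - y K)
        ≤ (Lx + Ly) * aN K * NY (ystar - y K) := by
      rw [dotp_add_left]
      have h1 := (le_abs_self _).trans (hby (x K - xhat K) (ystar - y K))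
      have h2 := (le_abs_self _).trans (hbx (x K - x (K - 1)) (ystar - y K))
      have h3 := hcx K hKK
      have h4 := mul_le_mul_of_nonneg_right (mul_le_mul_of_nonneg_left h3 hLy)
        (hNYnn (ystar - y K))
      simp only [haN]
      linarith
    simp only [hA]
    exact key_bound hμ hcφ hcψ (hNXnn _) (hNYnn _) (hη K hKK).1.le (hη K hKK).2 hDb
  have hBK : B K ≤ cφ / 4 * NX (x K - xstar) ^ 2 + cψ / 4 * bN K ^ 2 := by
    have hDb : dotp (Mx.transpose.mulVec (y K - yhat K) + My.transpose.mulVec (y K - y (K - 1)))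
        (x K - xstar) ≤ (Lx + Ly) * NX (x K - xstar) * bN K := by
      rw [dotp_add_left, dotp_transpose, dotp_transpose]
      have h1 := (le_abs_self _).trans (hbx (x K - xstar) (y K - yhat K))
      have h2 := (le_abs_self _).trans (hby (x K - xstar) (y K - y (K - 1)))
      have h3 := hcy K hKK
      have h4 := mul_le_mul_of_nonneg_left h3 (mul_nonneg hLx (hNXnn (x K - xstar)))
      simp only [hbN]
      linarith
    simp only [hB]
    exact key_bound hμ hcφ hcψ (hNXnn _) (hNYnn _) (hη K hKK).1.le (hη K hKK).2 hDb
  have hDxK : cφ / 4 * NX (x K - xstar) ^ 2 ≤ 1 / 2 * Dx K := by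
    have h1 := hφsc (x K) xstar
    have h2 : NX (x K - xstar) = NX (xstar - x K) := by
      rw [show x K - xstar = -(xstar - x K) by ring, hNXneg]
    simp only [hDx, breg]
    rw [h2] at *
    nlinarith [hNXnn (xstar - x K)]
  have hDyK : cψ / 4 * NY (ystar - y K) ^ 2 ≤ 1 / 2 * Dy K := by
    have h1 := hψsc (y K) ystar
    simp only [hDy, breg]
    nlinarith [hNYnn (ystar - y K)]
  have gDx0 : Dx 0 = breg φ xstar (x 0) := rfl
  have gDy0 : Dy 0 = breg ψ ystar (y 0) := rfl
  have gDxK : Dx K = breg φ xstar (x K) := rfl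
  have gDyK : Dy K = breg ψ ystar (y K) := rfl
  rw [hTD, hRHS] at hsum
  rw [← gDx0, ← gDy0, ← gDxK, ← gDyK]
  linarith
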